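/- Let n ≥ 3 and let s_1, s_2 be integers with 0 ≤ s_1, s_2 ≤ n-1 and s_1 ≠ s_2. Then there exist no reals a_1, a_2 > 0 such that F4(a_1,s_1) = F4(a_2,s_2) = F6(a_1,s_1) = F6(a_2,s_2) = 0. -/

import Mathlib

/-- `F4(a,s) = a^4 + s - 6a^2 s/(n-1) - 3s(s-1)/(n-1)`. -/
noncomputable def F4 (n : ℕ) (a : ℝ) (s : ℕ) : ℝ :=
  a ^ 4 + s - 6 * a ^ 2 * s / ((n : ℝ) - 1) - 3 * s * ((s : ℝ) - 1) / ((n : ℝ) - 1)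

/-- `F6(a,s) = a^6 + s - 15(a^4+a^2+s-1)s/(n-1) + 90a^2 s(s-1)/((n-1)(n-2))
  + 30 s(s-1)(s-2)/((n-1)(n-2))`. -/
noncomputable def F6 (n : ℕ) (a : ℝ) (s : ℕ) : ℝ :=
  a ^ 6 + s - 15 * (a ^ 4 + a ^ 2 + (s : ℝ) - 1) * s / ((n : ℝ) - 1)
    + 90 * a ^ 2 * s * ((s : ℝ) - 1) / (((n : ℝ) - 1) * ((n : ℝ) - 2))
    + 30 * s * ((s : ℝ) - 1) * ((s : ℝ) - 2) / (((n : ℝ) - 1) * ((n : ℝ) - 2))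

/-!
Write `N = n - 1`, `t = a²`, `σ = s`. Clearing denominators, `F4 = F6 = 0` become two polynomial
equations in `t`; eliminating `t` (a resultant computation) shows that `σ` is a root of a cubic
`p_N` depending only on `N` (here `σ > 0`, as `F4(a, 0) = a⁴`). Two values `s₁ ≠ s₂` admitting
solutions would be two distinct real roots of `p_N`, forcing its discriminant to be nonnegative, whereas
`disc p_N = 3888 N² (N-1)² (N+3) (N+5) (55 - 30N - 9N²) < 0` for `N ≥ 2`.
-/

open Polynomial

/-- The cubic `p_N`; the parameter `N` stands for `n - 1`. -/
noncomputable def designCubic (N : ℝ) : Cubic ℝ :=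
  ⟨-9 * (3 * N + 5), 9 * (3 * N ^ 2 + 12 * N + 5), -(3 * N * (3 * N + 13) * (N + 2)),
    N ^ 2 * (N + 5) ^ 2⟩

namespace Cubic

variable {R : Type*} [CommRing R]

theorem isRoot_toPoly_iff {P : Cubic R} {x : R} :
    P.toPoly.IsRoot x ↔ P.a * x ^ 3 + P.b * x ^ 2 + P.c * x + P.d = 0 := by
  simp only [IsRoot, toPoly, eval_C, eval_X, eval_add, eval_mul, eval_pow]

theorem discr_nonneg_of_isRoot_of_isRoot [LinearOrder R] [IsStrictOrderedRing R]
    {P : Cubic R} {x y : R} (hxy : x ≠ y) (hx : P.toPoly.IsRoot x) (hy : P.toPoly.IsRoot y) :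
    0 ≤ P.discr := by
  obtain ⟨a, b, c, d⟩ := P
  rw [isRoot_toPoly_iff] at hx hy
  have hxy' : x - y ≠ 0 := sub_ne_zero.mpr hxy
  -- Vieta for the pair of roots `x, y`: `c` and `d` are determined by `a, b, x, y`.
  have hc : c = -(a * (x ^ 2 + x * y + y ^ 2) + b * (x + y)) := by
    have : (x - y) * (a * (x ^ 2 + x * y + y ^ 2) + b * (x + y) + c) = 0 := by
      linear_combination hx - hy
    linear_combination (mul_eq_zero.mp this).resolve_left hxy'
  have hd : d = a * (x * y) * (x + y) + b * (x * y) := by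
    have : (x - y) * (a * (x * y) * (x + y) + b * (x * y) - d) = 0 := by
      linear_combination y * hx - x * hy
    linear_combination -(mul_eq_zero.mp this).resolve_left hxy'
  subst hc hd
  have key : discr ⟨a, b, -(a * (x ^ 2 + x * y + y ^ 2) + b * (x + y)),
      a * (x * y) * (x + y) + b * (x * y)⟩
      = (x - y) ^ 2 * ((a * (2 * x + y) + b) * (a * (x + 2 * y) + b)) ^ 2 := by
    simp only [discr]
    ring
  rw [key]
  positivity

end Cubic

theorem designCubic_discr (N : ℝ) :
    (designCubic N).discr
      = 3888 * N ^ 2 * (N - 1) ^ 2 * (N + 3) * (N + 5) * (55 - 30 * N - 9 * N ^ 2) := by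
  simp only [designCubic, Cubic.discr]
  ring

theorem designCubic_discr_neg {N : ℝ} (hN : 2 ≤ N) : (designCubic N).discr < 0 := by
  rw [designCubic_discr]
  have hpos : 0 < 3888 * N ^ 2 * (N - 1) ^ 2 * (N + 3) * (N + 5) := by
    have : 0 < N - 1 := by linarith
    positivity
  exact mul_neg_of_pos_of_neg hpos (by nlinarith)

/-- Elimination of `t` from the polynomial forms of `F4 = 0` and `F6 = 0`. -/
theorem designCubic_isRoot {N t σ : ℝ} (hN : 0 < N) (hσ : 0 < σ)
    (h4 : N * t ^ 2 - 6 * σ * t - 3 * σ ^ 2 + 3 * σ + σ * N = 0)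
    (h6 : N * (N - 1) * t ^ 3 + N * (N - 1) * σ - 15 * (N - 1) * (t ^ 2 + t + σ - 1) * σ
        + 90 * t * σ * (σ - 1) + 30 * σ * (σ - 1) * (σ - 2) = 0) :
    (designCubic N).toPoly.IsRoot σ := by
  rw [Cubic.isRoot_toPoly_iff]
  simp only [designCubic]
  -- `t` satisfies a linear equation `α t + β = 0`; substituting `t = -β/α` into `h4` gives `p_N`.
  set α := 3 * σ * (N + 2) - N * (N + 8)
  set β := 3 * σ ^ 2 - 3 * σ * (2 * N + 1) + N * (N + 5)
  have hlin : α * t + β = 0 := by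
    have : σ * N * (N + 9) * (α * t + β) = 0 := by
      linear_combination (-(N ^ 2 * (N - 1) * t) - 9 * σ * N + 9 * σ * N ^ 2) * h4 + N ^ 2 * h6
    exact (mul_eq_zero.mp this).resolve_left (by positivity)
  have hres : N * (σ + 1) *
      (-9 * (3 * N + 5) * σ ^ 3 + 9 * (3 * N ^ 2 + 12 * N + 5) * σ ^ 2
        + -(3 * N * (3 * N + 13) * (N + 2)) * σ + N ^ 2 * (N + 5) ^ 2) = 0 := by
    linear_combination α ^ 2 * h4 + (-(N * α * t) + 6 * σ * α + N * β) * hlin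
  exact (mul_eq_zero.mp hres).resolve_left (by positivity)

section

variable {n : ℕ} {a : ℝ} {s : ℕ}

theorem pos_of_F4_eq_zero (ha : a ≠ 0) (h : F4 n a s = 0) : 0 < s := by
  refine Nat.pos_of_ne_zero fun hs => ?_
  subst hs
  simp only [F4, Nat.cast_zero, mul_zero, zero_mul, zero_div, add_zero, sub_zero] at h
  exact ha (pow_eq_zero_iff (by norm_num) |>.mp h)

theorem sub_one_mul_F4 (hn : (n : ℝ) ≠ 1) :
    ((n : ℝ) - 1) * F4 n a s
      = ((n : ℝ) - 1) * (a ^ 2) ^ 2 - 6 * s * a ^ 2 - 3 * (s : ℝ) ^ 2 + 3 * s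
        + s * ((n : ℝ) - 1) := by
  have : (n : ℝ) - 1 ≠ 0 := sub_ne_zero.mpr hn
  simp only [F4]
  field_simp
  ring

theorem sub_one_mul_sub_two_mul_F6 (hn₁ : (n : ℝ) ≠ 1) (hn₂ : (n : ℝ) ≠ 2) :
    ((n : ℝ) - 1) * ((n : ℝ) - 2) * F6 n a s
      = ((n : ℝ) - 1) * ((n : ℝ) - 1 - 1) * (a ^ 2) ^ 3
        + ((n : ℝ) - 1) * ((n : ℝ) - 1 - 1) * s
        - 15 * ((n : ℝ) - 1 - 1) * ((a ^ 2) ^ 2 + a ^ 2 + s - 1) * s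
        + 90 * a ^ 2 * s * ((s : ℝ) - 1) + 30 * s * ((s : ℝ) - 1) * ((s : ℝ) - 2) := by
  have : (n : ℝ) - 1 ≠ 0 := sub_ne_zero.mpr hn₁
  have : (n : ℝ) - 2 ≠ 0 := sub_ne_zero.mpr hn₂
  simp only [F6]
  field_simp
  ring

theorem designCubic_isRoot_of_F4_F6 (hn : 3 ≤ n) (ha : a ≠ 0) (h4 : F4 n a s = 0)
    (h6 : F6 n a s = 0) : (designCubic ((n : ℝ) - 1)).toPoly.IsRoot s := by
  have hn' : (3 : ℝ) ≤ n := by exact_mod_cast hn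
  have e4 := sub_one_mul_F4 (a := a) (s := s) (show (n : ℝ) ≠ 1 by linarith)
  have e6 := sub_one_mul_sub_two_mul_F6 (a := a) (s := s) (show (n : ℝ) ≠ 1 by linarith)
    (show (n : ℝ) ≠ 2 by linarith)
  rw [h4, mul_zero] at e4
  rw [h6, mul_zero] at e6
  exact designCubic_isRoot (by linarith) (by exact_mod_cast pos_of_F4_eq_zero ha h4) e4.symm
    e6.symm

end

theorem no_common_zero_of_ne_general (n : ℕ) (hn : 3 ≤ n) (s₁ s₂ : ℕ)
    (hne : s₁ ≠ s₂) :
    ¬ ∃ a₁ a₂ : ℝ, 0 < a₁ ∧ 0 < a₂ ∧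
      F4 n a₁ s₁ = 0 ∧ F4 n a₂ s₂ = 0 ∧ F6 n a₁ s₁ = 0 ∧ F6 n a₂ s₂ = 0 := by
  rintro ⟨a₁, a₂, ha₁, ha₂, h41, h42, h61, h62⟩
  have hN : (2 : ℝ) ≤ (n : ℝ) - 1 := by
    have : (3 : ℝ) ≤ n := by exact_mod_cast hn
    linarith
  have hdiscr := Cubic.discr_nonneg_of_isRoot_of_isRoot (by exact_mod_cast hne)
    (designCubic_isRoot_of_F4_F6 hn ha₁.ne' h41 h61)
    (designCubic_isRoot_of_F4_F6 hn ha₂.ne' h42 h62)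
  exact (designCubic_discr_neg hN).not_ge hdiscr

/-- Case (iii) of the two-orbit 7-design characterization cannot occur when
`s₁ ≠ s₂`. -/
theorem no_common_zero_of_ne (n : ℕ) (hn : 3 ≤ n) (s₁ s₂ : ℕ)
    (hs₁ : s₁ ≤ n - 1) (hs₂ : s₂ ≤ n - 1) (hne : s₁ ≠ s₂) :
    ¬ ∃ a₁ a₂ : ℝ, 0 < a₁ ∧ 0 < a₂ ∧
      F4 n a₁ s₁ = 0 ∧ F4 n a₂ s₂ = 0 ∧ F6 n a₁ s₁ = 0 ∧ F6 n a₂ s₂ = 0 :=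
  no_common_zero_of_ne_general n hn s₁ s₂ hne
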